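/- For each n ≥ 1 there exist nonnegative integers γ_{n,k}, for 0 ≤ k ≤ ⌊(n−1)/2⌋, such that Σ_{π ∈ H(2) ∩ S_n} s^{des(π)} t^{ides(π)} = Σ_{k=0}^{⌊(n−1)/2⌋} γ_{n,k} (st)^k (1+st)^{n−1−2k}. -/

import Mathlib

/-- The number of descents of a permutation of `Fin n`. -/
def des {n : ℕ} (π : Equiv.Perm (Fin n)) : ℕ :=
  (Finset.univ.filter (fun p : Fin n × Fin n =>
    (p.2 : ℕ) = (p.1 : ℕ) + 1 ∧ π p.2 < π p.1)).card

/-- The number of descents of the inverse permutation. -/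
def ides {n : ℕ} (π : Equiv.Perm (Fin n)) : ℕ := des π⁻¹

/-- The direct sum `π ⊕ τ` of permutations: `(π ⊕ τ) i = π i` for `i < m`
and `(π ⊕ τ) (m + j) = m + τ j`. -/
def directSum {m k : ℕ} (π : Equiv.Perm (Fin m)) (τ : Equiv.Perm (Fin k)) :
    Equiv.Perm (Fin (m + k)) :=
  finSumFinEquiv.permCongr (Equiv.sumCongr π τ)

/-- The skew sum `π ⊖ τ` of permutations: `(π ⊖ τ) i = k + π i` for `i < m`
and `(π ⊖ τ) (m + j) = τ j`. -/
def skewSum {m k : ℕ} (π : Equiv.Perm (Fin m)) (τ : Equiv.Perm (Fin k)) :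
    Equiv.Perm (Fin (m + k)) :=
  (finSumFinEquiv.symm.trans
    ((Equiv.sumCongr π τ).trans (Equiv.sumComm (Fin m) (Fin k)))).trans
    (finSumFinEquiv.trans (finCongr (Nat.add_comm k m)))

/-- The separable permutations (the class `H(2)`): the smallest class of permutations
containing the trivial permutation of length 1 and closed under direct sums and
skew sums. -/
inductive SeparablePerm : {n : ℕ} → Equiv.Perm (Fin n) → Prop
  | one : SeparablePerm (1 : Equiv.Perm (Fin 1))
  | dsum {m k : ℕ} {π : Equiv.Perm (Fin m)} {τ : Equiv.Perm (Fin k)} :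
      SeparablePerm π → SeparablePerm τ → SeparablePerm (directSum π τ)
  | ssum {m k : ℕ} {π : Equiv.Perm (Fin m)} {τ : Equiv.Perm (Fin k)} :
      SeparablePerm π → SeparablePerm τ → SeparablePerm (skewSum π τ)

/-!
For separable permutations `ides = des`: both are additive under `⊕` and gain exactly one descent
under `⊖`. So the sum is `S_n(st)` with `S_n(x) = ∑ x ^ des π`. Cutting a separable permutation at
its first direct-sum split, or, after complementation, at its first skew-sum split, gives
`F = G (1 + F)`, `F = H (1 + x F)` and `G + H = F + z` for the generating functions of all,
`⊕`-indecomposable and `⊖`-indecomposable separable permutations; eliminating `G` and `H`,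
`F = z (1 + F) (1 + x F) + x F³`. Writing `F = z Φ`, every coefficient of `Φ` is obtained from
lower ones by multiplying by `1 + x` or `x` and by taking products, and the cones spanned by
`x ^ k (1 + x) ^ (d - 2k)` are closed under these operations with degrees adding up.
-/

open Finset Equiv

/-- Extending permutations by the identity to `ℕ` turns the `Fin` bookkeeping about blocks
into `omega` goals. -/
def natApply {n : ℕ} (π : Perm (Fin n)) (i : ℕ) : ℕ :=
  if h : i < n then π ⟨i, h⟩ else i

section NatApply

variable {n : ℕ}

lemma natApply_of_lt (π : Perm (Fin n)) {i : ℕ} (h : i < n) : natApply π i = π ⟨i, h⟩ :=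
  dif_pos h

lemma natApply_of_le (π : Perm (Fin n)) {i : ℕ} (h : n ≤ i) : natApply π i = i :=
  dif_neg (by omega)

lemma natApply_lt (π : Perm (Fin n)) {i : ℕ} (h : i < n) : natApply π i < n := by
  rw [natApply_of_lt π h]; exact (π _).2

@[simp] lemma natApply_one (i : ℕ) : natApply (1 : Perm (Fin n)) i = i := by
  unfold natApply; split_ifs <;> rfl

lemma natApply_mul (π ρ : Perm (Fin n)) (i : ℕ) :
    natApply (π * ρ) i = natApply π (natApply ρ i) := by
  rcases lt_or_ge i n with h | h
  · rw [natApply_of_lt _ h, natApply_of_lt _ h, natApply_of_lt _ (ρ _).2]; rfl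
  · rw [natApply_of_le _ h, natApply_of_le _ h, natApply_of_le _ h]

lemma natApply_inv_natApply (π : Perm (Fin n)) (i : ℕ) : natApply π⁻¹ (natApply π i) = i := by
  rw [← natApply_mul, inv_mul_cancel, natApply_one]

lemma natApply_natApply_inv (π : Perm (Fin n)) (i : ℕ) : natApply π (natApply π⁻¹ i) = i := by
  rw [← natApply_mul, mul_inv_cancel, natApply_one]

lemma natApply_injective (π : Perm (Fin n)) : Function.Injective (natApply π) :=
  Function.LeftInverse.injective (natApply_inv_natApply π)

lemma ext_natApply {π ρ : Perm (Fin n)} (h : ∀ i < n, natApply π i = natApply ρ i) : π = ρ := by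
  ext i
  simpa only [natApply_of_lt _ i.2] using h i i.2

end NatApply

def permCast {n n' : ℕ} (h : n = n') (π : Perm (Fin n)) : Perm (Fin n') :=
  (finCongr h).permCongr π

@[simp] lemma natApply_permCast {n n' : ℕ} (h : n = n') (π : Perm (Fin n)) (i : ℕ) :
    natApply (permCast h π) i = natApply π i := by
  subst h; rfl

lemma SeparablePerm.permCast {n n' : ℕ} (h : n = n') {π : Perm (Fin n)}
    (hπ : SeparablePerm π) : SeparablePerm (permCast h π) := by
  subst h; exact hπ

lemma SeparablePerm.pos {n : ℕ} {π : Perm (Fin n)} (h : SeparablePerm π) : 0 < n := by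
  induction h <;> omega

section Sums

variable {m k : ℕ} (σ : Perm (Fin m)) (τ : Perm (Fin k))

lemma natApply_directSum (i : ℕ) :
    natApply (directSum σ τ) i = if i < m then natApply σ i else m + natApply τ (i - m) := by
  rcases lt_or_ge i (m + k) with hi | hi
  · rw [natApply_of_lt _ hi]
    split_ifs with h
    · rw [natApply_of_lt _ h, show (⟨i, hi⟩ : Fin (m + k)) = Fin.castAdd k ⟨i, h⟩ from rfl]
      simp only [directSum, Equiv.permCongr_apply, finSumFinEquiv_symm_apply_castAdd,
        Equiv.sumCongr_apply, Sum.map_inl, finSumFinEquiv_apply_left, Fin.val_castAdd]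
    · obtain ⟨j, rfl⟩ : ∃ j, i = m + j := ⟨i - m, by omega⟩
      rw [Nat.add_sub_cancel_left, natApply_of_lt τ (by omega),
        show (⟨m + j, hi⟩ : Fin (m + k)) = Fin.natAdd m ⟨j, by omega⟩ from rfl]
      simp only [directSum, Equiv.permCongr_apply, finSumFinEquiv_symm_apply_natAdd,
        Equiv.sumCongr_apply, Sum.map_inr, finSumFinEquiv_apply_right, Fin.val_natAdd]
  · rw [natApply_of_le _ hi, if_neg (by omega), natApply_of_le τ (by omega)]
    omega

lemma natApply_skewSum {i : ℕ} (hi : i < m + k) :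
    natApply (skewSum σ τ) i = if i < m then k + natApply σ i else natApply τ (i - m) := by
  rw [natApply_of_lt _ hi]
  split_ifs with h
  · rw [natApply_of_lt _ h, show (⟨i, hi⟩ : Fin (m + k)) = Fin.castAdd k ⟨i, h⟩ from rfl]
    simp only [skewSum, Equiv.trans_apply, finSumFinEquiv_symm_apply_castAdd,
      Equiv.sumCongr_apply, Sum.map_inl, Equiv.sumComm_apply, Sum.swap_inl,
      finSumFinEquiv_apply_right, finCongr_apply, Fin.val_cast, Fin.val_natAdd]
  · obtain ⟨j, rfl⟩ : ∃ j, i = m + j := ⟨i - m, by omega⟩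
    rw [Nat.add_sub_cancel_left, natApply_of_lt τ (by omega),
      show (⟨m + j, hi⟩ : Fin (m + k)) = Fin.natAdd m ⟨j, by omega⟩ from rfl]
    simp only [skewSum, Equiv.trans_apply, finSumFinEquiv_symm_apply_natAdd,
      Equiv.sumCongr_apply, Sum.map_inr, Equiv.sumComm_apply, Sum.swap_inr,
      finSumFinEquiv_apply_left, finCongr_apply, Fin.val_cast, Fin.val_castAdd]

lemma directSum_inv : (directSum σ τ)⁻¹ = directSum σ⁻¹ τ⁻¹ := by
  refine inv_eq_of_mul_eq_one_right (ext_natApply fun i hi => ?_)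
  rw [natApply_mul, natApply_one, natApply_directSum, natApply_directSum]
  split_ifs with h h'
  · exact natApply_natApply_inv σ i
  · exact absurd (natApply_lt _ h) h'
  · omega
  · rw [Nat.add_sub_cancel_left, natApply_natApply_inv]; omega

lemma skewSum_inv : (skewSum σ τ)⁻¹ = permCast (Nat.add_comm k m) (skewSum τ⁻¹ σ⁻¹) := by
  refine inv_eq_of_mul_eq_one_right (ext_natApply fun i hi => ?_)
  rw [natApply_mul, natApply_one, natApply_permCast,
    natApply_skewSum τ⁻¹ σ⁻¹ (show i < k + m by omega)]
  split_ifs with h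
  · have := natApply_lt τ⁻¹ h
    rw [natApply_skewSum _ _ (by omega), if_neg (by omega), Nat.add_sub_cancel_left,
      natApply_natApply_inv]
  · have := natApply_lt σ⁻¹ (show i - k < m by omega)
    rw [natApply_skewSum _ _ (by omega), if_pos this, natApply_natApply_inv]
    omega

end Sums

lemma des_eq_sum {n : ℕ} (π : Perm (Fin n)) :
    des π = ∑ i ∈ range (n - 1), if natApply π (i + 1) < natApply π i then 1 else 0 := by
  rw [← Finset.card_filter, des]
  refine Finset.card_bij (fun p _ => p.1.val) ?_ ?_ ?_
  · rintro ⟨a, b⟩ hp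
    simp only [Finset.mem_filter, Finset.mem_univ, true_and, Finset.mem_range] at hp ⊢
    obtain ⟨hab, hlt⟩ := hp
    have hb : (⟨a + 1, by omega⟩ : Fin n) = b := Fin.ext hab.symm
    refine ⟨by omega, ?_⟩
    rw [natApply_of_lt _ (by omega), natApply_of_lt _ a.2, hb]
    exact hlt
  · rintro ⟨a, b⟩ hp ⟨a', b'⟩ hp' h
    simp only [Finset.mem_filter, Finset.mem_univ, true_and] at hp hp'
    have ha : a = a' := Fin.ext h
    have hb : b = b' := Fin.ext (by omega)
    rw [ha, hb]
  · intro i hi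
    simp only [Finset.mem_filter, Finset.mem_range] at hi
    obtain ⟨hi, hlt⟩ := hi
    refine ⟨(⟨i, by omega⟩, ⟨i + 1, by omega⟩), ?_, rfl⟩
    rw [natApply_of_lt _ (by omega), natApply_of_lt _ (by omega)] at hlt
    simpa using hlt

@[simp] lemma des_permCast {n n' : ℕ} (h : n = n') (π : Perm (Fin n)) :
    des (permCast h π) = des π := by
  subst h; rfl

lemma des_le {n : ℕ} (π : Perm (Fin n)) : des π ≤ n - 1 := by
  rw [des_eq_sum]
  calc _ ≤ ∑ _i ∈ range (n - 1), 1 := Finset.sum_le_sum fun i _ => by split <;> omega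
    _ = n - 1 := by simp

lemma des_eq_of_blocks {m k : ℕ} {π : Perm (Fin (m + k))} {σ : Perm (Fin m)}
    {τ : Perm (Fin k)} (a b : ℕ) (hm : 0 < m) (hk : 0 < k)
    (hσ : ∀ i < m, natApply π i = a + natApply σ i)
    (hτ : ∀ j < k, natApply π (m + j) = b + natApply τ j) :
    des π = des σ + des τ + if natApply π m < natApply π (m - 1) then 1 else 0 := by
  obtain ⟨m, rfl⟩ : ∃ m', m = m' + 1 := ⟨m - 1, by omega⟩
  obtain ⟨k, rfl⟩ : ∃ k', k = k' + 1 := ⟨k - 1, by omega⟩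
  simp only [des_eq_sum, Nat.add_sub_cancel, show m + 1 + (k + 1) - 1 = m + 1 + k by omega,
    Finset.sum_range_add, Finset.sum_range_succ]
  have hleft : ∀ i ∈ range m, (if natApply π (i + 1) < natApply π i then 1 else 0) =
      if natApply σ (i + 1) < natApply σ i then 1 else 0 := by
    intro i hi
    rw [Finset.mem_range] at hi
    rw [hσ i (by omega), hσ (i + 1) (by omega)]
    simp only [Nat.add_lt_add_iff_left]
  have hright : ∀ j ∈ range k, (if natApply π (m + 1 + j + 1) < natApply π (m + 1 + j) then 1
      else 0) = if natApply τ (j + 1) < natApply τ j then 1 else 0 := by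
    intro j hj
    rw [Finset.mem_range] at hj
    rw [show m + 1 + j + 1 = m + 1 + (j + 1) by omega, hτ j (by omega), hτ (j + 1) (by omega)]
    simp only [Nat.add_lt_add_iff_left]
  rw [Finset.sum_congr rfl hleft, Finset.sum_congr rfl hright]
  omega

section Sums

variable {m k : ℕ} (σ : Perm (Fin m)) (τ : Perm (Fin k))

lemma des_directSum (hm : 0 < m) (hk : 0 < k) : des (directSum σ τ) = des σ + des τ := by
  have hm' := natApply_lt σ (show m - 1 < m by omega)
  rw [des_eq_of_blocks 0 m hm hk (fun i hi => by rw [natApply_directSum, if_pos hi, zero_add])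
    (fun j _ => by rw [natApply_directSum, if_neg (by omega), Nat.add_sub_cancel_left]),
    natApply_directSum, natApply_directSum]
  split_ifs <;> omega

lemma des_skewSum (hm : 0 < m) (hk : 0 < k) : des (skewSum σ τ) = des σ + des τ + 1 := by
  have hk' := natApply_lt τ hk
  rw [des_eq_of_blocks k 0 hm hk
    (fun i hi => by rw [natApply_skewSum _ _ (by omega), if_pos hi])
    (fun j _ => by rw [natApply_skewSum _ _ (by omega), if_neg (by omega),
      Nat.add_sub_cancel_left, zero_add]),
    natApply_skewSum _ _ (by omega), natApply_skewSum _ _ (by omega), Nat.sub_self]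
  split_ifs <;> omega

lemma ides_directSum (hm : 0 < m) (hk : 0 < k) : ides (directSum σ τ) = ides σ + ides τ := by
  rw [ides, directSum_inv, des_directSum _ _ hm hk, ides, ides]

lemma ides_skewSum (hm : 0 < m) (hk : 0 < k) : ides (skewSum σ τ) = ides σ + ides τ + 1 := by
  rw [ides, skewSum_inv, des_permCast, des_skewSum _ _ hk hm, ides, ides]
  omega

end Sums

lemma SeparablePerm.ides_eq_des {n : ℕ} {π : Perm (Fin n)} (h : SeparablePerm π) :
    ides π = des π := by
  induction h with
  | one => rfl
  | dsum h₁ h₂ ih₁ ih₂ =>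
    rw [ides_directSum _ _ h₁.pos h₂.pos, des_directSum _ _ h₁.pos h₂.pos, ih₁, ih₂]
  | ssum h₁ h₂ ih₁ ih₂ =>
    rw [ides_skewSum _ _ h₁.pos h₂.pos, des_skewSum _ _ h₁.pos h₂.pos, ih₁, ih₂]

section Complement

lemma natApply_revPerm_mul {n : ℕ} (π : Perm (Fin n)) {i : ℕ} (hi : i < n) :
    natApply (Fin.revPerm * π) i = n - 1 - natApply π i := by
  rw [natApply_of_lt _ hi, natApply_of_lt _ hi]
  simp only [Perm.coe_mul, Function.comp_apply, Fin.revPerm_apply, Fin.val_rev]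
  omega

lemma revPerm_mul_revPerm_mul {n : ℕ} (π : Perm (Fin n)) :
    Fin.revPerm * (Fin.revPerm * π) = π := by
  ext i
  simp

variable {m k : ℕ} (σ : Perm (Fin m)) (τ : Perm (Fin k))

lemma revPerm_mul_directSum :
    Fin.revPerm * directSum σ τ = skewSum (Fin.revPerm * σ) (Fin.revPerm * τ) := by
  refine ext_natApply fun i hi => ?_
  rw [natApply_revPerm_mul _ hi, natApply_directSum, natApply_skewSum _ _ hi]
  split_ifs with h
  · have := natApply_lt σ h
    rw [natApply_revPerm_mul _ h]
    omega
  · have := natApply_lt τ (show i - m < k by omega)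
    rw [natApply_revPerm_mul _ (by omega)]
    omega

lemma revPerm_mul_skewSum :
    Fin.revPerm * skewSum σ τ = directSum (Fin.revPerm * σ) (Fin.revPerm * τ) := by
  conv_lhs => rw [← revPerm_mul_revPerm_mul σ, ← revPerm_mul_revPerm_mul τ,
    ← revPerm_mul_directSum, revPerm_mul_revPerm_mul]

end Complement

lemma SeparablePerm.revPerm_mul {n : ℕ} {π : Perm (Fin n)} (h : SeparablePerm π) :
    SeparablePerm (Fin.revPerm * π) := by
  induction h with
  | one => rw [Subsingleton.elim (Fin.revPerm * 1 : Perm (Fin 1)) 1]; exact .one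
  | dsum _ _ ih₁ ih₂ => rw [revPerm_mul_directSum]; exact ih₁.ssum ih₂
  | ssum _ _ ih₁ ih₂ => rw [revPerm_mul_skewSum]; exact ih₁.dsum ih₂

lemma des_revPerm_mul {n : ℕ} (π : Perm (Fin n)) : des (Fin.revPerm * π) = n - 1 - des π := by
  suffices des (Fin.revPerm * π) + des π = n - 1 by omega
  rw [des_eq_sum, des_eq_sum, ← Finset.sum_add_distrib]
  have hone : ∀ i ∈ range (n - 1),
      ((if natApply (Fin.revPerm * π) (i + 1) < natApply (Fin.revPerm * π) i then 1 else 0) +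
        if natApply π (i + 1) < natApply π i then 1 else 0) = 1 := by
    intro i hi
    rw [Finset.mem_range] at hi
    have ha := natApply_lt π (show i < n by omega)
    have hb := natApply_lt π (show i + 1 < n by omega)
    have hne : natApply π (i + 1) ≠ natApply π i := fun h => by
      have := natApply_injective π h; omega
    rw [natApply_revPerm_mul _ (by omega), natApply_revPerm_mul _ (by omega)]
    split_ifs <;> omega
  rw [Finset.sum_congr rfl hone]
  simp

/-- `π` is a direct sum of blocks of lengths `m` and `n - m`. -/
def SplitsAt {n : ℕ} (π : Perm (Fin n)) (m : ℕ) : Prop :=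
  ∀ i < n, (i < m ↔ natApply π i < m)

section Split

variable {n m : ℕ} {π : Perm (Fin n)}

lemma SplitsAt.inv (h : SplitsAt π m) : SplitsAt π⁻¹ m := fun v hv => by
  simpa only [natApply_natApply_inv, Iff.comm] using h _ (natApply_lt π⁻¹ hv)

lemma natApply_lt_of_splitsAt (h : SplitsAt π m) (hm : m ≤ n) {i : ℕ} (hi : i < m) :
    natApply π i < m :=
  (h i (by omega)).mp hi

lemma le_natApply_of_splitsAt (h : SplitsAt π m) {i : ℕ} (hi : m ≤ i) : m ≤ natApply π i := by
  rcases lt_or_ge i n with hin | hin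
  · exact not_lt.mp fun hc => by have := (h i hin).mpr hc; omega
  · rwa [natApply_of_le _ hin]

def splitLeft (π : Perm (Fin n)) (hm : m ≤ n) (h : SplitsAt π m) : Perm (Fin m) where
  toFun i := ⟨natApply π i, natApply_lt_of_splitsAt h hm i.2⟩
  invFun i := ⟨natApply π⁻¹ i, natApply_lt_of_splitsAt h.inv hm i.2⟩
  left_inv i := Fin.ext (natApply_inv_natApply π i)
  right_inv i := Fin.ext (natApply_natApply_inv π i)

def splitRight (π : Perm (Fin n)) (hm : m ≤ n) (h : SplitsAt π m) : Perm (Fin (n - m)) where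
  toFun j := ⟨natApply π (m + j) - m, by
    have := j.2; have := natApply_lt π (show m + j < n by omega); omega⟩
  invFun j := ⟨natApply π⁻¹ (m + j) - m, by
    have := j.2; have := natApply_lt π⁻¹ (show m + j < n by omega); omega⟩
  left_inv j := Fin.ext <| by
    have := le_natApply_of_splitsAt h (show m ≤ m + j by omega)
    simp only [Nat.add_sub_cancel' this, natApply_inv_natApply, Nat.add_sub_cancel_left]
  right_inv j := Fin.ext <| by
    have := le_natApply_of_splitsAt h.inv (show m ≤ m + j by omega)
    simp only [Nat.add_sub_cancel' this, natApply_natApply_inv, Nat.add_sub_cancel_left]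

variable (hm : m ≤ n) (h : SplitsAt π m)

lemma natApply_splitLeft {i : ℕ} (hi : i < m) : natApply (splitLeft π hm h) i = natApply π i := by
  rw [natApply_of_lt _ hi]; rfl

lemma natApply_splitRight {j : ℕ} (hj : j < n - m) :
    natApply (splitRight π hm h) j = natApply π (m + j) - m := by
  rw [natApply_of_lt _ hj]; rfl

lemma splitLeft_eq {ρ : Perm (Fin m)} (hρ : ∀ i < m, natApply ρ i = natApply π i) :
    splitLeft π hm h = ρ :=
  ext_natApply fun i hi => by rw [natApply_splitLeft hm h hi, hρ i hi]

lemma splitRight_eq {ρ : Perm (Fin (n - m))}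
    (hρ : ∀ j < n - m, m + natApply ρ j = natApply π (m + j)) : splitRight π hm h = ρ :=
  ext_natApply fun j hj => by rw [natApply_splitRight hm h hj, ← hρ j hj]; omega

lemma splitsAt_splitLeft_iff {m' : ℕ} (hm' : m' ≤ m) :
    SplitsAt (splitLeft π hm h) m' ↔ SplitsAt π m' := by
  refine ⟨fun h' i hi => ?_, fun h' i hi => ?_⟩
  · rcases lt_or_ge i m with him | him
    · simpa only [natApply_splitLeft hm h him] using h' i him
    · have := le_natApply_of_splitsAt h him
      omega
  · simpa only [natApply_splitLeft hm h hi] using h' i (by omega)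

end Split

def castDirectSum {n m : ℕ} (hm : m ≤ n) (σ : Perm (Fin m)) (τ : Perm (Fin (n - m))) :
    Perm (Fin n) :=
  permCast (Nat.add_sub_cancel' hm) (directSum σ τ)

section CastDirectSum

variable {n m : ℕ} (hm : m ≤ n) (σ : Perm (Fin m)) (τ : Perm (Fin (n - m)))

lemma natApply_castDirectSum (i : ℕ) :
    natApply (castDirectSum hm σ τ) i = if i < m then natApply σ i else m + natApply τ (i - m) := by
  rw [castDirectSum, natApply_permCast, natApply_directSum]

lemma splitsAt_castDirectSum : SplitsAt (castDirectSum hm σ τ) m := fun i _ => by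
  rw [natApply_castDirectSum]
  split_ifs with h
  · exact iff_of_true h (natApply_lt σ h)
  · exact iff_of_false h (by omega)

lemma splitLeft_castDirectSum (h : SplitsAt (castDirectSum hm σ τ) m) :
    splitLeft (castDirectSum hm σ τ) hm h = σ :=
  splitLeft_eq hm h fun i hi => by rw [natApply_castDirectSum, if_pos hi]

lemma splitRight_castDirectSum (h : SplitsAt (castDirectSum hm σ τ) m) :
    splitRight (castDirectSum hm σ τ) hm h = τ :=
  splitRight_eq hm h fun j _ => by
    rw [natApply_castDirectSum, if_neg (by omega), Nat.add_sub_cancel_left]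

lemma castDirectSum_splitLeft_splitRight {π : Perm (Fin n)} (h : SplitsAt π m) :
    castDirectSum hm (splitLeft π hm h) (splitRight π hm h) = π := by
  refine ext_natApply fun i hi => ?_
  rw [natApply_castDirectSum]
  split_ifs with him
  · exact natApply_splitLeft hm h him
  · have := le_natApply_of_splitsAt h (not_lt.mp him)
    rw [natApply_splitRight hm h (by omega), Nat.add_sub_cancel' (not_lt.mp him)]
    omega

lemma des_castDirectSum (h₀ : 0 < m) (hmn : m < n) :
    des (castDirectSum hm σ τ) = des σ + des τ := by
  rw [castDirectSum, des_permCast, des_directSum _ _ h₀ (by omega)]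

lemma SeparablePerm.castDirectSum {σ : Perm (Fin m)} {τ : Perm (Fin (n - m))}
    (hσ : SeparablePerm σ) (hτ : SeparablePerm τ) : SeparablePerm (castDirectSum hm σ τ) :=
  (hσ.dsum hτ).permCast _

end CastDirectSum

section SplitsOfSums

variable {a b m : ℕ} {σ : Perm (Fin a)} {τ : Perm (Fin b)}

lemma splitsAt_directSum (σ : Perm (Fin a)) (τ : Perm (Fin b)) : SplitsAt (directSum σ τ) a :=
  fun i _ => by
    rw [natApply_directSum]
    split_ifs with h
    · exact iff_of_true h (natApply_lt σ h)
    · exact iff_of_false h (by omega)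

lemma SplitsAt.of_directSum_left (h : SplitsAt (directSum σ τ) m) : SplitsAt σ m := fun i hi => by
  simpa only [natApply_directSum, if_pos hi] using h i (by omega)

lemma SplitsAt.of_directSum_right (h : SplitsAt (directSum σ τ) m) (ham : a ≤ m) :
    SplitsAt τ (m - a) := fun j hj => by
  have := h (a + j) (by omega)
  rw [natApply_directSum, if_neg (by omega), Nat.add_sub_cancel_left] at this
  omega

lemma not_splitsAt_skewSum (σ : Perm (Fin a)) (τ : Perm (Fin b)) (ha : 0 < a) (hb : 0 < b)
    (hm : 0 < m) (hmn : m < a + b) : ¬ SplitsAt (skewSum σ τ) m := by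
  intro h
  have hfirst := (h 0 (by omega)).mp hm
  have hlast := le_natApply_of_splitsAt h (show m ≤ a + b - 1 by omega)
  rw [natApply_skewSum _ _ (by omega), if_pos ha] at hfirst
  rw [natApply_skewSum _ _ (by omega), if_neg (by omega)] at hlast
  have := natApply_lt τ (show a + b - 1 - a < b by omega)
  omega

end SplitsOfSums

lemma SeparablePerm.splitLeft {n m : ℕ} {π : Perm (Fin n)} (hπ : SeparablePerm π) (h₀ : 0 < m)
    (hmn : m < n) (h : SplitsAt π m) : SeparablePerm (splitLeft π hmn.le h) := by
  induction hπ generalizing m with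
  | one => omega
  | @dsum a b σ τ hσ hτ ihσ ihτ =>
    rcases lt_or_ge m a with hma | ham
    · have hσm := h.of_directSum_left
      rw [splitLeft_eq _ h (ρ := _root_.splitLeft σ hma.le hσm) fun i hi => by
        rw [natApply_splitLeft _ _ hi, natApply_directSum, if_pos (by omega)]]
      exact ihσ h₀ hma hσm
    · have hτm := h.of_directSum_right ham
      rcases ham.eq_or_lt with rfl | ham
      · rw [splitLeft_eq _ h (ρ := σ) fun i hi => by rw [natApply_directSum, if_pos hi]]
        exact hσ
      rw [splitLeft_eq _ h (ρ := _root_.permCast (by omega)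
          (directSum σ (_root_.splitLeft τ (by omega : m - a ≤ b) hτm))) fun i hi => by
        rw [natApply_permCast, natApply_directSum, natApply_directSum]
        split_ifs with hia
        · rfl
        · rw [natApply_splitLeft _ _ (by omega)]]
      exact (hσ.dsum (ihτ (by omega) (by omega) hτm)).permCast _
  | ssum hσ hτ => exact absurd h (not_splitsAt_skewSum _ _ hσ.pos hτ.pos h₀ hmn)

lemma SeparablePerm.splitRight {n m : ℕ} {π : Perm (Fin n)} (hπ : SeparablePerm π) (h₀ : 0 < m)
    (hmn : m < n) (h : SplitsAt π m) : SeparablePerm (splitRight π hmn.le h) := by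
  induction hπ generalizing m with
  | one => omega
  | @dsum a b σ τ hσ hτ ihσ ihτ =>
    rcases lt_or_ge m a with hma | ham
    · have hσm := h.of_directSum_left
      rw [splitRight_eq _ h (ρ := _root_.permCast (by omega)
          (directSum (_root_.splitRight σ hma.le hσm) τ)) fun j hj => by
        rw [natApply_permCast, natApply_directSum, natApply_directSum]
        split_ifs with hja hja'
        · have := le_natApply_of_splitsAt hσm (show m ≤ m + j by omega)
          rw [natApply_splitRight _ _ hja]
          omega
        · omega
        · omega
        · rw [show j - (a - m) = m + j - a by omega]
          omega]
      exact (ihσ h₀ hma hσm).dsum hτ |>.permCast _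
    · have hτm := h.of_directSum_right ham
      rcases ham.eq_or_lt with rfl | ham
      · rw [splitRight_eq _ h (ρ := _root_.permCast (by omega) τ) fun j _ => by
          rw [natApply_permCast, natApply_directSum, if_neg (by omega), Nat.add_sub_cancel_left]]
        exact hτ.permCast _
      rw [splitRight_eq _ h (ρ := _root_.permCast (by omega)
          (_root_.splitRight τ (by omega : m - a ≤ b) hτm)) fun j hj => by
        have := le_natApply_of_splitsAt hτm (show m - a ≤ m - a + j by omega)
        rw [natApply_permCast, natApply_splitRight _ _ (by omega), natApply_directSum,
          if_neg (by omega), show m + j - a = m - a + j by omega]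
        omega]
      exact (ihτ (by omega) (by omega) hτm).permCast _
  | ssum hσ hτ => exact absurd h (not_splitsAt_skewSum _ _ hσ.pos hτ.pos h₀ hmn)

/-- `π 0 < π (n - 1)` for a nontrivial direct sum, `π (n - 1) < π 0` for a nontrivial skew sum. -/
lemma not_splitsAt_and_splitsAt_revPerm_mul {n m m' : ℕ} (π : Perm (Fin n)) (h₀ : 0 < m)
    (hmn : m < n) (h₀' : 0 < m') (hmn' : m' < n) (h : SplitsAt π m)
    (h' : SplitsAt (Fin.revPerm * π) m') : False := by
  have hfirst := natApply_lt_of_splitsAt h hmn.le h₀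
  have hfirst' := natApply_lt_of_splitsAt h' hmn'.le h₀'
  have hlast := le_natApply_of_splitsAt h (show m ≤ n - 1 by omega)
  have hlast' := le_natApply_of_splitsAt h' (show m' ≤ n - 1 by omega)
  rw [natApply_revPerm_mul _ (by omega)] at hfirst' hlast'
  have := natApply_lt π (show n - 1 < n by omega)
  omega

lemma SeparablePerm.splitsAt_or_splitsAt_revPerm_mul {n : ℕ} {π : Perm (Fin n)}
    (hπ : SeparablePerm π) (hn : 2 ≤ n) :
    (∃ m, 0 < m ∧ m < n ∧ SplitsAt π m) ∨ ∃ m, 0 < m ∧ m < n ∧ SplitsAt (Fin.revPerm * π) m := by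
  cases hπ with
  | one => omega
  | @dsum a b σ τ hσ hτ => exact .inl ⟨a, hσ.pos, by have := hτ.pos; omega, splitsAt_directSum σ τ⟩
  | @ssum a b σ τ hσ hτ =>
    refine .inr ⟨a, hσ.pos, by have := hτ.pos; omega, ?_⟩
    rw [revPerm_mul_skewSum]
    exact splitsAt_directSum _ _

def DirectIndecomposable {n : ℕ} (π : Perm (Fin n)) : Prop :=
  ∀ m, 0 < m → m < n → ¬ SplitsAt π m

section FirstSplit

open scoped Classical

variable {n : ℕ} (π : Perm (Fin n))

lemma exists_splitsAt : ∃ m, 0 < m ∧ SplitsAt π m :=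
  ⟨n + 1, by omega, fun i hi => iff_of_true (by omega) (by have := natApply_lt π hi; omega)⟩

noncomputable def firstSplit : ℕ := Nat.find (exists_splitsAt π)

lemma firstSplit_pos : 0 < firstSplit π := (Nat.find_spec (exists_splitsAt π)).1

lemma firstSplit_le (hn : 0 < n) : firstSplit π ≤ n :=
  Nat.find_min' _ ⟨hn, fun _ hi => iff_of_true hi (natApply_lt π hi)⟩

lemma firstSplit_eq_iff {j : ℕ} (hj : 0 < j) :
    firstSplit π = j ↔ SplitsAt π j ∧ ∀ m, 0 < m → m < j → ¬ SplitsAt π m := by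
  rw [firstSplit, Nat.find_eq_iff]
  simp only [hj, true_and, not_and]
  exact and_congr_right fun _ => ⟨fun h m hm₀ hm => h m hm hm₀, fun h m hm hm₀ => h m hm₀ hm⟩

lemma firstSplit_eq_self_iff (hn : 0 < n) : firstSplit π = n ↔ DirectIndecomposable π := by
  rw [firstSplit_eq_iff π hn]
  exact and_iff_right fun _ hi => iff_of_true hi (natApply_lt π hi)

end FirstSplit

section Counting

open scoped Classical

noncomputable def separables (n : ℕ) : Finset (Perm (Fin n)) :=
  Finset.univ.filter fun π => SeparablePerm π

noncomputable def indecSeparables (n : ℕ) : Finset (Perm (Fin n)) :=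
  (separables n).filter DirectIndecomposable

noncomputable def skewIndecSeparables (n : ℕ) : Finset (Perm (Fin n)) :=
  (separables n).filter fun π => DirectIndecomposable (Fin.revPerm * π)

@[simp] lemma mem_separables {n : ℕ} {π : Perm (Fin n)} : π ∈ separables n ↔ SeparablePerm π := by
  simp [separables]

variable {M : Type*} [AddCommMonoid M]

/-- Cutting a separable permutation at its first split is a bijection onto pairs of an
indecomposable and an arbitrary separable permutation. -/
lemma sum_filter_firstSplit_eq (w : ℕ → M) {n j : ℕ} (hj : 0 < j) (hjn : j < n) :
    ∑ π ∈ (separables n).filter (firstSplit · = j), w (des π) =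
      ∑ σ ∈ indecSeparables j, ∑ τ ∈ separables (n - j), w (des σ + des τ) := by
  have hsplit : ∀ π ∈ (separables n).filter (firstSplit · = j), SplitsAt π j := fun π hπ =>
    ((firstSplit_eq_iff π hj).mp (Finset.mem_filter.mp hπ).2).1
  rw [← Finset.sum_product']
  refine Finset.sum_bij' (fun π hπ => (splitLeft π hjn.le (hsplit π hπ),
      splitRight π hjn.le (hsplit π hπ))) (fun p _ => castDirectSum hjn.le p.1 p.2)
    ?_ ?_ ?_ ?_ ?_
  · intro π hπ
    obtain ⟨hsep, hfirst⟩ := Finset.mem_filter.mp hπ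
    rw [mem_separables] at hsep
    have hmin := ((firstSplit_eq_iff π hj).mp hfirst).2
    simp only [Finset.mem_product, indecSeparables, Finset.mem_filter, mem_separables]
    refine ⟨⟨hsep.splitLeft hj hjn _, fun m hm₀ hm hm' => hmin m hm₀ hm ?_⟩,
      hsep.splitRight hj hjn _⟩
    exact (splitsAt_splitLeft_iff _ _ hm.le).mp hm'
  · rintro ⟨σ, τ⟩ hp
    simp only [Finset.mem_product, indecSeparables, Finset.mem_filter, mem_separables] at hp
    obtain ⟨⟨hσ, hσind⟩, hτ⟩ := hp
    refine Finset.mem_filter.mpr ⟨mem_separables.mpr (hσ.castDirectSum _ hτ), ?_⟩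
    refine (firstSplit_eq_iff _ hj).mpr ⟨splitsAt_castDirectSum _ _ _, fun m hm₀ hm hm' => ?_⟩
    have := (splitsAt_splitLeft_iff hjn.le (splitsAt_castDirectSum hjn.le σ τ) hm.le).mpr hm'
    rw [splitLeft_castDirectSum] at this
    exact hσind m hm₀ hm this
  · intro π hπ
    exact castDirectSum_splitLeft_splitRight _ (hsplit π hπ)
  · rintro ⟨σ, τ⟩ _
    have h := splitsAt_castDirectSum hjn.le σ τ
    exact Prod.ext (splitLeft_castDirectSum _ _ _ h) (splitRight_castDirectSum _ _ _ h)
  · intro π hπ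
    conv_lhs => rw [← castDirectSum_splitLeft_splitRight hjn.le (hsplit π hπ)]
    rw [des_castDirectSum _ _ _ hj hjn]

lemma sum_separables_eq (w : ℕ → M) {n : ℕ} (hn : 0 < n) :
    ∑ π ∈ separables n, w (des π) = ∑ π ∈ indecSeparables n, w (des π) +
      ∑ m ∈ Ico 1 n, ∑ σ ∈ indecSeparables m, ∑ τ ∈ separables (n - m), w (des σ + des τ) := by
  have hmaps : ∀ π ∈ separables n, firstSplit π ∈ insert n (Ico 1 n) := fun π _ => by
    have := firstSplit_pos π
    have := firstSplit_le π hn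
    simp only [Finset.mem_insert, Finset.mem_Ico]
    omega
  rw [← Finset.sum_fiberwise_of_maps_to hmaps, Finset.sum_insert (by simp)]
  congr 1
  · refine Finset.sum_congr (Finset.filter_congr fun π _ => ?_) fun _ _ => rfl
    exact firstSplit_eq_self_iff π hn
  · refine Finset.sum_congr rfl fun j hj => ?_
    rw [Finset.mem_Ico] at hj
    exact sum_filter_firstSplit_eq w hj.1 hj.2

lemma sum_separables_revPerm_mul {n : ℕ} (f : Perm (Fin n) → M) :
    ∑ π ∈ separables n, f (Fin.revPerm * π) = ∑ π ∈ separables n, f π :=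
  Finset.sum_nbij' (Fin.revPerm * ·) (Fin.revPerm * ·)
    (fun π hπ => by simpa using (mem_separables.mp hπ).revPerm_mul)
    (fun π hπ => by simpa using (mem_separables.mp hπ).revPerm_mul)
    (fun π _ => revPerm_mul_revPerm_mul π) (fun π _ => revPerm_mul_revPerm_mul π)
    (fun π _ => rfl)

lemma sum_indecSeparables_revPerm_mul {n : ℕ} (f : Perm (Fin n) → M) :
    ∑ π ∈ indecSeparables n, f (Fin.revPerm * π) = ∑ π ∈ skewIndecSeparables n, f π :=
  Finset.sum_nbij' (Fin.revPerm * ·) (Fin.revPerm * ·)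
    (fun π hπ => by
      simp only [indecSeparables, skewIndecSeparables, Finset.mem_filter, mem_separables,
        revPerm_mul_revPerm_mul] at hπ ⊢
      exact ⟨hπ.1.revPerm_mul, hπ.2⟩)
    (fun π hπ => by
      simp only [indecSeparables, skewIndecSeparables, Finset.mem_filter, mem_separables] at hπ ⊢
      exact ⟨hπ.1.revPerm_mul, hπ.2⟩)
    (fun π _ => revPerm_mul_revPerm_mul π) (fun π _ => revPerm_mul_revPerm_mul π)
    (fun π _ => rfl)

end Counting

lemma SeparablePerm.directIndecomposable_iff {n : ℕ} {π : Perm (Fin n)} (hπ : SeparablePerm π)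
    (hn : 2 ≤ n) : DirectIndecomposable π ↔ ¬ DirectIndecomposable (Fin.revPerm * π) := by
  simp only [DirectIndecomposable, not_forall, not_not, exists_prop]
  constructor
  · intro hind
    rcases hπ.splitsAt_or_splitsAt_revPerm_mul hn with ⟨m, h₀, hmn, h⟩ | h
    · exact absurd h (hind m h₀ hmn)
    · exact h
  · rintro ⟨m', h₀', hmn', h'⟩ m h₀ hmn h
    exact not_splitsAt_and_splitsAt_revPerm_mul π h₀ hmn h₀' hmn' h h'

lemma directIndecomposable_of_le_one {n : ℕ} (hn : n ≤ 1) (π : Perm (Fin n)) :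
    DirectIndecomposable π := fun _ _ _ => by omega

lemma separables_zero : separables 0 = ∅ :=
  Finset.eq_empty_of_forall_notMem fun π hπ => by
    have := (mem_separables.mp hπ).pos; omega

lemma separables_one : separables 1 = {1} := by
  ext π
  rw [mem_separables, Finset.mem_singleton, Subsingleton.elim π 1]
  exact iff_of_true .one rfl

lemma sum_antidiagonal_eq_sum_Ico {R : Type*} [CommSemiring R] {f g : ℕ → R} (hf : f 0 = 0)
    (hg : g 0 = 0) (n : ℕ) :
    ∑ p ∈ antidiagonal n, f p.1 * g p.2 = ∑ m ∈ Ico 1 n, f m * g (n - m) := by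
  rw [Finset.Nat.sum_antidiagonal_eq_sum_range_succ (fun a b => f a * g b), Finset.sum_range_succ]
  rcases Nat.eq_zero_or_pos n with rfl | hn
  · simp [hf]
  · rw [Finset.sum_range_eq_add_Ico _ hn, Nat.sub_self, hf, hg]
    simp

section DescentPolynomials

variable {R : Type*} [CommSemiring R] (x : R)

noncomputable def sepPoly (n : ℕ) : R := ∑ π ∈ separables n, x ^ des π

noncomputable def indecPoly (n : ℕ) : R := ∑ π ∈ indecSeparables n, x ^ des π

noncomputable def skewIndecPoly (n : ℕ) : R := ∑ π ∈ skewIndecSeparables n, x ^ des π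

lemma sepPoly_zero : sepPoly x 0 = 0 := by simp [sepPoly, separables_zero]

lemma indecPoly_zero : indecPoly x 0 = 0 := by simp [indecPoly, indecSeparables, separables_zero]

lemma skewIndecPoly_zero : skewIndecPoly x 0 = 0 := by
  simp [skewIndecPoly, skewIndecSeparables, separables_zero]

lemma sepPoly_eq_indecPoly_add (n : ℕ) :
    sepPoly x n = indecPoly x n + ∑ p ∈ antidiagonal n, indecPoly x p.1 * sepPoly x p.2 := by
  rcases Nat.eq_zero_or_pos n with rfl | hn
  · simp [sepPoly_zero, indecPoly_zero]
  rw [sum_antidiagonal_eq_sum_Ico (indecPoly_zero x) (sepPoly_zero x), sepPoly,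
    sum_separables_eq (x ^ ·) hn, indecPoly]
  simp only [sepPoly, indecPoly, Finset.sum_mul_sum, pow_add]

/-- Complementation `π ↦ rev ∘ π` turns the decomposition by direct sums into the decomposition
by skew sums, and `des` into `n - 1 - des`. -/
lemma sepPoly_eq_skewIndecPoly_add (n : ℕ) :
    sepPoly x n = skewIndecPoly x n +
      x * ∑ p ∈ antidiagonal n, skewIndecPoly x p.1 * sepPoly x p.2 := by
  rcases Nat.eq_zero_or_pos n with rfl | hn
  · simp [sepPoly_zero, skewIndecPoly_zero]
  have hsep (m : ℕ) : sepPoly x m = ∑ π ∈ separables m, x ^ (m - 1 - des π) := by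
    simp only [sepPoly, ← sum_separables_revPerm_mul (x ^ des ·), des_revPerm_mul]
  have hskew (m : ℕ) : skewIndecPoly x m = ∑ π ∈ indecSeparables m, x ^ (m - 1 - des π) := by
    simp only [skewIndecPoly, ← sum_indecSeparables_revPerm_mul (x ^ des ·), des_revPerm_mul]
  rw [sum_antidiagonal_eq_sum_Ico (skewIndecPoly_zero x) (sepPoly_zero x), hsep,
    sum_separables_eq (fun d => x ^ (n - 1 - d)) hn, hskew, Finset.mul_sum]
  congr 1
  refine Finset.sum_congr rfl fun m hm => ?_
  rw [Finset.mem_Ico] at hm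
  rw [hskew, hsep, Finset.sum_mul_sum, Finset.mul_sum]
  refine Finset.sum_congr rfl fun σ _ => ?_
  rw [Finset.mul_sum]
  refine Finset.sum_congr rfl fun τ _ => ?_
  have := des_le σ
  have := des_le τ
  rw [← pow_add, ← pow_succ']
  congr 1
  omega

open scoped Classical in
lemma indecPoly_add_skewIndecPoly (n : ℕ) :
    indecPoly x n + skewIndecPoly x n = sepPoly x n + if n = 1 then 1 else 0 := by
  rcases le_or_gt n 1 with hn | hn
  · have hind : indecSeparables n = separables n :=
      Finset.filter_true_of_mem fun π _ => directIndecomposable_of_le_one hn π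
    have hskew : skewIndecSeparables n = separables n :=
      Finset.filter_true_of_mem fun π _ => directIndecomposable_of_le_one hn _
    rw [indecPoly, skewIndecPoly, hind, hskew, ← sepPoly]
    interval_cases n
    · simp [sepPoly_zero]
    · have : des (1 : Perm (Fin 1)) = 0 := Nat.le_zero.mp (des_le _)
      simp [sepPoly, separables_one, this]
  · have hind : indecSeparables n =
        (separables n).filter fun π => ¬ DirectIndecomposable (Fin.revPerm * π) :=
      Finset.filter_congr fun π hπ => (mem_separables.mp hπ).directIndecomposable_iff hn
    rw [indecPoly, skewIndecPoly, hind, skewIndecSeparables,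
      Finset.sum_filter_not_add_sum_filter, if_neg (by omega), add_zero, sepPoly]

end DescentPolynomials

section GeneratingFunction

open PowerSeries

lemma eq_of_decompositions {R : Type*} [CommRing R] (x : R) {F G H : R⟦X⟧}
    (h₁ : F = G * (1 + F)) (h₂ : F = H * (1 + C x * F)) (h₃ : G + H = F + X) :
    F = X * ((1 + F) * (1 + C x * F)) + C x * F ^ 3 := by
  linear_combination (1 + C x * F) * h₁ + (1 + F) * h₂ + (1 + F) * (1 + C x * F) * h₃

variable {R : Type*} [CommRing R] (x : R)

/-- Shifted by one, so that the coefficient of `tⁿ` should lie in `gammaCone x n`. -/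
noncomputable def sepSeries : R⟦X⟧ := mk fun n => sepPoly x (n + 1)

lemma sepSeries_eq : sepSeries x =
    1 + X * (C (1 + x) * sepSeries x + X * (C x * (sepSeries x ^ 2 + sepSeries x ^ 3))) := by
  set F : R⟦X⟧ := mk (sepPoly x)
  have hF : F = X * sepSeries x := by
    ext (_ | n) <;> simp [F, sepSeries, sepPoly_zero, coeff_succ_X_mul]
  have h₁ : F = mk (indecPoly x) * (1 + F) := by
    ext n
    simp [F, mul_add, coeff_mul, ← sepPoly_eq_indecPoly_add]
  have h₂ : F = mk (skewIndecPoly x) * (1 + C x * F) := by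
    ext n
    rw [mul_add, mul_one, mul_left_comm, map_add, coeff_C_mul, coeff_mul]
    simp only [F, coeff_mk]
    exact sepPoly_eq_skewIndecPoly_add x n
  have h₃ : mk (indecPoly x) + mk (skewIndecPoly x) = F + X := by
    ext n
    simp [F, coeff_X, indecPoly_add_skewIndecPoly]
  have key := eq_of_decompositions x h₁ h₂ h₃
  rw [hF] at key
  apply X_mul_cancel
  rw [map_add, map_one]
  linear_combination key

end GeneratingFunction

section GammaCone

open PowerSeries
open scoped Pointwise

variable {R : Type*} [CommSemiring R] (x : R)

def gammaCone (d : ℕ) : AddSubmonoid R :=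
  AddSubmonoid.closure (Set.range fun k : Fin (d / 2 + 1) => x ^ (k : ℕ) * (1 + x) ^ (d - 2 * k))

lemma gammaCone_mul_mem {d e : ℕ} {a b : R} (ha : a ∈ gammaCone x d) (hb : b ∈ gammaCone x e) :
    a * b ∈ gammaCone x (d + e) := by
  refine (show gammaCone x d * gammaCone x e ≤ gammaCone x (d + e) from ?_)
    (AddSubmonoid.mul_mem_mul ha hb)
  rw [gammaCone, gammaCone, AddSubmonoid.closure_mul_closure]
  refine AddSubmonoid.closure_mono ?_
  rintro _ ⟨_, ⟨k, rfl⟩, _, ⟨l, rfl⟩, rfl⟩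
  have hk := k.2
  have hl := l.2
  refine ⟨⟨k + l, by omega⟩, ?_⟩
  dsimp only
  rw [show d + e - 2 * (k + l : ℕ) = (d - 2 * k) + (e - 2 * l) by omega, pow_add, pow_add]
  ring

lemma one_mem_gammaCone : (1 : R) ∈ gammaCone x 0 :=
  AddSubmonoid.subset_closure ⟨0, by simp⟩

lemma one_add_mem_gammaCone : 1 + x ∈ gammaCone x 1 :=
  AddSubmonoid.subset_closure ⟨0, by simp⟩

lemma self_mem_gammaCone : x ∈ gammaCone x 2 :=
  AddSubmonoid.subset_closure ⟨1, by simp⟩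

lemma exists_eq_sum_of_mem_gammaCone {d : ℕ} {a : R} (ha : a ∈ gammaCone x d) :
    ∃ γ : ℕ → ℕ, a = ∑ k ∈ range (d / 2 + 1), (γ k : R) * x ^ k * (1 + x) ^ (d - 2 * k) := by
  obtain ⟨c, rfl⟩ := AddSubmonoid.mem_closure_range_iff_of_fintype.mp ha
  refine ⟨fun k => if h : k < d / 2 + 1 then c ⟨k, h⟩ else 0, ?_⟩
  rw [← Fin.sum_univ_eq_sum_range]
  refine Finset.sum_congr rfl fun k _ => ?_
  simp [nsmul_eq_mul, mul_assoc, show (k : ℕ) < d / 2 + 1 from k.2]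

lemma coeff_mul_mem_gammaCone {P Q : R⟦X⟧} {j : ℕ} (hP : ∀ i ≤ j, coeff i P ∈ gammaCone x i)
    (hQ : ∀ i ≤ j, coeff i Q ∈ gammaCone x i) : coeff j (P * Q) ∈ gammaCone x j := by
  rw [coeff_mul]
  refine AddSubmonoid.sum_mem _ fun p hp => ?_
  rw [Finset.HasAntidiagonal.mem_antidiagonal] at hp
  exact hp ▸ gammaCone_mul_mem x (hP _ (by omega)) (hQ _ (by omega))

/-- Each coefficient is built from lower ones by the operations under which the cones are
closed, with degrees adding up. -/
lemma coeff_mem_gammaCone_of_eq {Φ : R⟦X⟧}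
    (h : Φ = 1 + X * (C (1 + x) * Φ + X * (C x * (Φ ^ 2 + Φ ^ 3)))) (j : ℕ) :
    coeff j Φ ∈ gammaCone x j := by
  induction j using Nat.strong_induction_on with
  | _ j ih =>
  rw [h]
  rcases j with _ | _ | j
  · simpa using one_mem_gammaCone x
  · simpa using gammaCone_mul_mem x (one_add_mem_gammaCone x) (ih 0 (by omega))
  · have hΦ : ∀ i ≤ j, coeff i Φ ∈ gammaCone x i := fun i hi => ih i (by omega)
    have hΦ2 : ∀ i ≤ j, coeff i (Φ ^ 2) ∈ gammaCone x i := fun i hi => by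
      rw [sq]
      exact coeff_mul_mem_gammaCone x (fun l hl => hΦ l (hl.trans hi))
        (fun l hl => hΦ l (hl.trans hi))
    have hΦ3 : coeff j (Φ ^ 3) ∈ gammaCone x j := by
      rw [pow_succ]
      exact coeff_mul_mem_gammaCone x hΦ2 hΦ
    have hlin := gammaCone_mul_mem x (one_add_mem_gammaCone x) (ih (j + 1) (by omega))
    have hcub := gammaCone_mul_mem x (self_mem_gammaCone x) (add_mem (hΦ2 j le_rfl) hΦ3)
    rw [map_add, coeff_one, if_neg (by omega), zero_add, coeff_succ_X_mul, map_add, coeff_C_mul,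
      coeff_succ_X_mul, coeff_C_mul, map_add]
    rw [show 1 + (j + 1) = j + 1 + 1 by omega] at hlin
    rw [show 2 + j = j + 1 + 1 by omega] at hcub
    exact add_mem hlin hcub

end GammaCone

theorem sepPoly_mem_gammaCone {R : Type*} [CommRing R] (x : R) (n : ℕ) :
    sepPoly x n ∈ gammaCone x (n - 1) := by
  rcases n with _ | n
  · rw [sepPoly_zero]; exact zero_mem _
  · simpa [sepSeries] using coeff_mem_gammaCone_of_eq x (sepSeries_eq x) n

open MvPolynomial in
open scoped Classical in
theorem stmt10_general (n : ℕ) :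
    ∃ γ : ℕ → ℕ,
      (∑ π ∈ Finset.univ.filter (fun π : Equiv.Perm (Fin n) => SeparablePerm π),
        (X 0 : MvPolynomial (Fin 2) ℤ) ^ des π * (X 1) ^ ides π) =
      ∑ k ∈ Finset.range ((n - 1) / 2 + 1),
        (γ k : MvPolynomial (Fin 2) ℤ) * (X 0 * X 1) ^ k *
          (1 + X 0 * X 1) ^ (n - 1 - 2 * k) := by
  have hpoly : (∑ π ∈ Finset.univ.filter (fun π : Equiv.Perm (Fin n) => SeparablePerm π),
      (X 0 : MvPolynomial (Fin 2) ℤ) ^ des π * (X 1) ^ ides π) = sepPoly (X 0 * X 1) n :=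
    Finset.sum_congr rfl fun π hπ => by
      rw [(mem_separables.mp hπ).ides_eq_des, mul_pow]
  rw [hpoly]
  exact exists_eq_sum_of_mem_gammaCone _ (sepPoly_mem_gammaCone _ n)

open MvPolynomial in
open scoped Classical in
/-- The two-sided descent polynomial of the separable permutations of length `n`
is gamma-positive, with `s = X 0`, `t = X 1`, and gamma basis elements
`(st)^k (1+st)^{n-1-2k}`. -/
theorem stmt10 (n : ℕ) (hn : 1 ≤ n) :
    ∃ γ : ℕ → ℕ,
      (∑ π ∈ Finset.univ.filter (fun π : Equiv.Perm (Fin n) => SeparablePerm π),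
        (X 0 : MvPolynomial (Fin 2) ℤ) ^ des π * (X 1) ^ ides π) =
      ∑ k ∈ Finset.range ((n - 1) / 2 + 1),
        (γ k : MvPolynomial (Fin 2) ℤ) * (X 0 * X 1) ^ k *
          (1 + X 0 * X 1) ^ (n - 1 - 2 * k) :=
  stmt10_general n
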